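/- arXiv:1603.06683 — 4 statements merged into one kernel-verified Lean document; each statement's English description precedes it below -/
import Mathlib

section
/- For H_m the set of matrices in SL(2,ℤ) whose (2,1) entry is divisible by m: for a prime p, the index [SL(2,ℤ) : H_p] = p+1, and more generally [SL(2,ℤ) : H_{p^j}] = (p+1)·p^{j-1} for j ≥ 1. -/
/-
`SL(2, ℤ)` acts on `(ℤ/n)²` through reduction mod `n`. The stabiliser of `e₁ = (1, 0)` is
`{a ≡ 1, c ≡ 0}`, the kernel of the surjection `Γ₀(n) → (ℤ/n)ˣ, g ↦ d mod n`, so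
`[SL(2, ℤ) : Γ₀(n)] · φ(n)` is the size of the orbit of `e₁`. That orbit consists of first columns
of determinant-one matrices, i.e. of coprime pairs; when `ℤ/n` is local (`n = p ^ j`) these are the
pairs with a unit entry, and there are `n² - (n - φ(n))² = p^(2j) - p^(2j-2)` of them. Dividing by
`φ(p ^ j) = p^(j-1) (p - 1)` leaves `(p + 1) p^(j-1)`.
-/

open CongruenceSubgroup

/-- `H m = Γ₀(m)` : matrices in `SL(2, ℤ)` whose lower-left entry is divisible by `m`. -/
def H (m : ℕ) : Subgroup (Matrix.SpecialLinearGroup (Fin 2) ℤ) := Gamma0 m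

open Matrix MulAction
open scoped MatrixGroups

lemma ncard_isUnit_or_isUnit_add (R : Type*) [Monoid R] [Finite R] :
    {v : Fin 2 → R | IsUnit (v 0) ∨ IsUnit (v 1)}.ncard + (nonunits R).ncard ^ 2 =
      Nat.card R ^ 2 := by
  have hcompl : {v : Fin 2 → R | IsUnit (v 0) ∨ IsUnit (v 1)}ᶜ =
      Set.univ.pi fun _ => nonunits R := by
    ext v
    simp [Fin.forall_fin_two, mem_nonunits_iff]
  have hpi : (Set.univ.pi fun _ : Fin 2 => nonunits R).ncard = (nonunits R).ncard ^ 2 := by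
    rw [← Nat.card_coe_set_eq, Nat.card_congr (Equiv.Set.univPi _), Nat.card_pi,
      Fin.prod_univ_two, Nat.card_coe_set_eq, sq]
  rw [← hpi, ← hcompl, Set.ncard_add_ncard_compl, Nat.card_fun, Nat.card_fin]

lemma card_units_add_ncard_nonunits (R : Type*) [Monoid R] [Finite R] :
    Nat.card Rˣ + (nonunits R).ncard = Nat.card R := by
  have hunits : (nonunits R)ᶜ = Set.range ((↑) : Rˣ → R) := by
    ext x
    simp [mem_nonunits_iff, IsUnit]
  rw [← Set.ncard_add_ncard_compl (nonunits R), hunits,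
    Set.ncard_range_of_injective Units.val_injective, add_comm]

lemma ZMod.isLocalRing_prime_pow {p : ℕ} [Fact p.Prime] {j : ℕ} (hj : j ≠ 0) :
    IsLocalRing (ZMod (p ^ j)) :=
  haveI : Nontrivial (ZMod (p ^ j)) :=
    ZMod.nontrivial_iff.2 (Nat.one_lt_pow hj (Fact.out : p.Prime).one_lt).ne'
  IsLocalRing.of_surjective' (PadicInt.toZModPow j) (ZMod.ringHom_surjective _)

namespace CongruenceSubgroup

variable {n : ℕ}

instance : MulAction SL(2, ℤ) (Fin 2 → ZMod n) :=
  MulAction.compHom _ (SpecialLinearGroup.map (Int.castRingHom (ZMod n)))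

lemma smul_vecCons (g : SL(2, ℤ)) (x y : ZMod n) :
    g • ![x, y] = ![g 0 0 * x + g 0 1 * y, g 1 0 * x + g 1 1 * y] := by
  change (g : Matrix (Fin 2) (Fin 2) ℤ).map (Int.cast : ℤ → ZMod n) *ᵥ ![x, y] = _
  ext i
  fin_cases i <;> simp [mulVec, dotProduct, Fin.sum_univ_two]

lemma smul_one_zero (g : SL(2, ℤ)) :
    g • (![1, 0] : Fin 2 → ZMod n) = ![(g 0 0 : ZMod n), g 1 0] := by
  simp [smul_vecCons]

lemma det_intCast (g : SL(2, ℤ)) : (g 0 0 : ZMod n) * g 1 1 - g 0 1 * g 1 0 = 1 := by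
  have h := g.det_coe
  rw [det_fin_two] at h
  exact_mod_cast congrArg (Int.cast : ℤ → ZMod n) h

lemma mem_stabilizer_one_zero_iff {g : SL(2, ℤ)} :
    g ∈ stabilizer SL(2, ℤ) (![1, 0] : Fin 2 → ZMod n) ↔
      (g 0 0 : ZMod n) = 1 ∧ (g 1 0 : ZMod n) = 0 := by
  simp [mem_stabilizer_iff, smul_one_zero, vecCons_inj]

lemma stabilizer_one_zero_le_Gamma0 :
    stabilizer SL(2, ℤ) (![1, 0] : Fin 2 → ZMod n) ≤ Gamma0 n :=
  fun _ hg => Gamma0_mem.2 (mem_stabilizer_one_zero_iff.1 hg).2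

lemma stabilizer_one_zero_subgroupOf_Gamma0 :
    (stabilizer SL(2, ℤ) (![1, 0] : Fin 2 → ZMod n)).subgroupOf (Gamma0 n) =
      (Gamma0Map n).toHomUnits.ker := by
  ext ⟨g, hg⟩
  have hdet := det_intCast (n := n) g
  rw [Gamma0_mem.1 hg, mul_zero, sub_zero] at hdet
  simp only [Subgroup.mem_subgroupOf, mem_stabilizer_one_zero_iff, Gamma0_mem.1 hg, and_true,
    MonoidHom.mem_ker, Units.ext_iff, MonoidHom.coe_toHomUnits, Units.val_one]
  change _ ↔ ((g 1 1 : ℤ) : ZMod n) = 1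
  constructor <;> intro h <;> simpa [h] using hdet

lemma exists_Gamma0_diag (u : (ZMod n)ˣ) :
    ∃ g : SL(2, ℤ), (g 0 0 : ZMod n) = u ∧ (g 1 0 : ZMod n) = 0 ∧ (g 1 1 : ZMod n) = ↑u⁻¹ := by
  obtain ⟨a, ha⟩ := ZMod.intCast_surjective (u : ZMod n)
  obtain ⟨d, hd⟩ := ZMod.intCast_surjective (↑u⁻¹ : ZMod n)
  obtain ⟨k, hk⟩ : (n : ℤ) ∣ a * d - 1 :=
    (ZMod.intCast_zmod_eq_zero_iff_dvd _ _).1 (by push_cast [ha, hd]; simp)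
  refine ⟨⟨!![a, k; n, d], by rw [det_fin_two_of]; linarith⟩, ?_, ?_, ?_⟩ <;> simp [ha, hd]

lemma surjective_toHomUnits_Gamma0Map : Function.Surjective (Gamma0Map n).toHomUnits := by
  intro u
  obtain ⟨g, -, hc, hd⟩ := exists_Gamma0_diag u⁻¹
  refine ⟨⟨g, Gamma0_mem.2 hc⟩, Units.ext ?_⟩
  change ((g 1 1 : ℤ) : ZMod n) = u
  simpa using hd

lemma relIndex_stabilizer_one_zero_Gamma0 :
    (stabilizer SL(2, ℤ) (![1, 0] : Fin 2 → ZMod n)).relIndex (Gamma0 n) =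
      Nat.card (ZMod n)ˣ := by
  rw [Subgroup.relIndex, stabilizer_one_zero_subgroupOf_Gamma0, Subgroup.index_ker,
    MonoidHom.range_eq_top.2 surjective_toHomUnits_Gamma0Map, Subgroup.card_top]

lemma isCoprime_of_mem_orbit_one_zero {v : Fin 2 → ZMod n}
    (hv : v ∈ orbit SL(2, ℤ) (![1, 0] : Fin 2 → ZMod n)) : IsCoprime (v 0) (v 1) := by
  obtain ⟨g, rfl⟩ := hv
  refine ⟨g 1 1, -g 0 1, ?_⟩
  simp only [smul_one_zero, cons_val_zero, cons_val_one]
  linear_combination det_intCast (n := n) g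

lemma mem_orbit_one_zero_of_isUnit_fst {x y : ZMod n} (hx : IsUnit x) :
    ![x, y] ∈ orbit SL(2, ℤ) (![1, 0] : Fin 2 → ZMod n) := by
  obtain ⟨g, ha, hc, -⟩ := exists_Gamma0_diag hx.unit
  obtain ⟨t, ht⟩ := ZMod.intCast_surjective (y * ((hx.unit⁻¹ : (ZMod n)ˣ) : ZMod n))
  rw [mem_orbit_iff]
  let L : SL(2, ℤ) := ⟨!![1, 0; t, 1], by simp [det_fin_two_of]⟩
  refine ⟨L * g, ?_⟩
  rw [mul_smul, smul_one_zero, ha, hc, smul_vecCons]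
  simp [L, ht, mul_assoc]

lemma mem_orbit_one_zero_of_isUnit {v : Fin 2 → ZMod n} (hv : IsUnit (v 0) ∨ IsUnit (v 1)) :
    v ∈ orbit SL(2, ℤ) (![1, 0] : Fin 2 → ZMod n) := by
  obtain ⟨x, y, rfl⟩ : ∃ x y, v = ![x, y] := ⟨v 0, v 1, by ext i; fin_cases i <;> rfl⟩
  rcases hv with hx | hy
  · exact mem_orbit_one_zero_of_isUnit_fst hx
  · obtain ⟨g, hg⟩ := mem_orbit_iff.1 (mem_orbit_one_zero_of_isUnit_fst (y := -x) hy)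
    rw [mem_orbit_iff]
    refine ⟨ModularGroup.S * g, ?_⟩
    rw [mul_smul, hg, smul_vecCons]
    simp [ModularGroup.S]

lemma orbit_one_zero [IsLocalRing (ZMod n)] :
    orbit SL(2, ℤ) (![1, 0] : Fin 2 → ZMod n) = {v | IsUnit (v 0) ∨ IsUnit (v 1)} := by
  ext v
  refine ⟨fun hv => ?_, mem_orbit_one_zero_of_isUnit⟩
  obtain ⟨a, b, hab⟩ := isCoprime_of_mem_orbit_one_zero hv
  exact (IsLocalRing.isUnit_or_isUnit_of_isUnit_add (hab ▸ isUnit_one)).imp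
    isUnit_of_mul_isUnit_right isUnit_of_mul_isUnit_right

theorem index_Gamma0_mul_card_units [IsLocalRing (ZMod n)] :
    (Gamma0 n).index * Nat.card (ZMod n)ˣ =
      {v : Fin 2 → ZMod n | IsUnit (v 0) ∨ IsUnit (v 1)}.ncard := by
  rw [← relIndex_stabilizer_one_zero_Gamma0, mul_comm,
    Subgroup.relIndex_mul_index stabilizer_one_zero_le_Gamma0, index_stabilizer, orbit_one_zero]

theorem index_Gamma0_mul_totient_add_sq [NeZero n] [IsLocalRing (ZMod n)] :
    (Gamma0 n).index * n.totient + (n - n.totient) ^ 2 = n ^ 2 := by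
  have hunits := card_units_add_ncard_nonunits (ZMod n)
  have hcount := ncard_isUnit_or_isUnit_add (ZMod n)
  rw [Nat.card_eq_fintype_card (α := (ZMod n)ˣ), ZMod.card_units_eq_totient, Nat.card_zmod]
    at hunits
  rw [← index_Gamma0_mul_card_units, Nat.card_eq_fintype_card, ZMod.card_units_eq_totient,
    Nat.card_zmod] at hcount
  rwa [show (nonunits (ZMod n)).ncard = n - n.totient by omega] at hcount

theorem index_Gamma0_prime_pow {p : ℕ} (hp : p.Prime) {j : ℕ} (hj : j ≠ 0) :
    (Gamma0 (p ^ j)).index = (p + 1) * p ^ (j - 1) := by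
  have := Fact.mk hp
  have := ZMod.isLocalRing_prime_pow (p := p) hj
  have : NeZero (p ^ j) := ⟨pow_ne_zero _ hp.ne_zero⟩
  have h := index_Gamma0_mul_totient_add_sq (n := p ^ j)
  obtain ⟨k, rfl⟩ := Nat.exists_eq_add_one_of_ne_zero hj
  generalize (Gamma0 (p ^ (k + 1))).index = I at h ⊢
  obtain ⟨q, rfl⟩ := Nat.exists_eq_add_one_of_ne_zero hp.ne_zero
  have hq : q ≠ 0 := by rintro rfl; exact Nat.not_prime_one hp
  rw [Nat.totient_prime_pow_succ hp, pow_succ (q + 1) k, Nat.add_sub_cancel, mul_add_one,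
    Nat.add_sub_cancel_left] at h
  rw [Nat.add_sub_cancel]
  refine Nat.eq_of_mul_eq_mul_right (by positivity) (Nat.add_right_cancel (h.trans ?_))
  ring

end CongruenceSubgroup

theorem stmt4 (p : ℕ) (hp : p.Prime) :
    (H p).index = p + 1 ∧ ∀ j : ℕ, 1 ≤ j → (H (p ^ j)).index = (p + 1) * p ^ (j - 1) := by
  refine ⟨?_, fun j hj => index_Gamma0_prime_pow hp (by omega)⟩
  simpa [H] using index_Gamma0_prime_pow hp one_ne_zero
end

section
/- For an odd prime p, every element of PSL(2, ℤ/pℤ) has order at most p, and the element represented by the matrix (1 1; 0 1) has order exactly p. -/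
instance zpowersNegOneNormal (q : ℕ) :
    (Subgroup.zpowers (-1 : Matrix.SpecialLinearGroup (Fin 2) (ZMod q))).Normal := by
  constructor
  intro x hx g
  rw [Subgroup.mem_zpowers_iff] at hx
  obtain ⟨k, rfl⟩ := hx
  have hc : Commute g ((-1 : Matrix.SpecialLinearGroup (Fin 2) (ZMod q)) ^ k) :=
    (Commute.neg_one_right g).zpow_right k
  rw [hc.eq, mul_assoc]
  simp only [mul_inv_cancel, mul_one]
  exact Subgroup.mem_zpowers_iff.mpr ⟨k, rfl⟩

/-- `PSL(2, ℤ/qℤ) = SL(2, ℤ/qℤ)/{±I}`. -/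
abbrev PSL (q : ℕ) :=
  Matrix.SpecialLinearGroup (Fin 2) (ZMod q) ⧸
    Subgroup.zpowers (-1 : Matrix.SpecialLinearGroup (Fin 2) (ZMod q))

/-!
For `A ∈ SL(2, 𝔽_p)` the matrices `A` and `B = A⁻¹` commute, `A + B = t • 1` with `t = tr A`, and
`(A - B)² = (t² - 4) • 1`. Frobenius gives `A ^ p + B ^ p = t • 1` and `A ^ p - B ^ p = ε • (A - B)`
with `ε = (t² - 4) ^ ((p - 1) / 2) ∈ {0, 1, -1}` (Euler's criterion), so `A ^ p` is `A`, `A⁻¹` or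
`±1`. Accordingly `A ^ (p - 1)`, `A ^ (p + 1)` or `A ^ p` is `±1`; in the middle case
`A ^ ((p + 1) / 2)` is an involution of `SL(2)`, hence `±1` as well. The `n`-th power of
`!![1, 1; 0, 1]` is `!![1, n; 0, 1]`, which is `±1` only when `p ∣ n`.
-/

open Matrix
open scoped MatrixGroups

theorem ZMod.two_ne_zero_of_ne_two {p : ℕ} [Fact p.Prime] (hp2 : p ≠ 2) : (2 : ZMod p) ≠ 0 :=
  Ring.two_ne_zero (by rwa [ZMod.ringChar_zmod_n])

theorem pow_char_eq_self_or_eq_or_eq_one_or_eq_neg_one {p : ℕ} [hp : Fact p.Prime] (hp2 : p ≠ 2)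
    {R : Type*} [Ring R] [Algebra (ZMod p) R] [CharP R p] {x y : R} {t : ZMod p} (hxy : x * y = 1)
    (hsum : x + y = t • 1) : x ^ p = x ∨ x ^ p = y ∨ x ^ p = 1 ∨ x ^ p = -1 := by
  obtain ⟨m, hm⟩ := hp.out.odd_of_ne_two hp2
  have hc : Commute x y := by
    rw [eq_sub_of_add_eq' hsum]
    exact ((Commute.one_right x).smul_right t).sub_right (Commute.refl x)
  have hsq : (x - y) ^ 2 = (t ^ 2 - 4) • (1 : R) := calc
    (x - y) ^ 2 = (x + y) ^ 2 - 4 * (x * y) := by rw [hc.sub_sq, hc.add_sq]; noncomm_ring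
    _ = (t ^ 2 - 4) • (1 : R) := by
      rw [hsum, hxy, smul_pow, one_pow, sub_smul, mul_one, ← map_ofNat (algebraMap (ZMod p) R) 4,
        Algebra.algebraMap_eq_smul_one]
  have hfrob_add : x ^ p + y ^ p = t • 1 := by
    rw [← add_pow_char_of_commute p hc, hsum, smul_pow, one_pow, ZMod.pow_card]
  have hfrob_sub : x ^ p - y ^ p = (t ^ 2 - 4) ^ m • (x - y) := by
    rw [← sub_pow_char_of_commute p hc, show (x - y) ^ p = ((x - y) ^ 2) ^ m * (x - y) by
      rw [← pow_mul, ← pow_succ, hm], hsq, smul_pow, one_pow, smul_one_mul]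
  have htwo_smul : (2 : ZMod p) • x ^ p = x + y + (t ^ 2 - 4) ^ m • (x - y) := by
    rw [hsum, ← hfrob_add, ← hfrob_sub]
    module
  have cancel := smul_right_injective R (ZMod.two_ne_zero_of_ne_two hp2)
  by_cases hD : t ^ 2 - 4 = 0
  · have hm0 : m ≠ 0 := by have := hp.out.two_le; omega
    rw [hD, zero_pow hm0, zero_smul, add_zero, hsum] at htwo_smul
    rcases sq_eq_sq_iff_eq_or_eq_neg.mp (by linear_combination hD : t ^ 2 = 2 ^ 2) with rfl | rfl
    · exact Or.inr (Or.inr (Or.inl (cancel (htwo_smul.trans (by module)))))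
    · exact Or.inr (Or.inr (Or.inr (cancel (htwo_smul.trans (by module)))))
  · have hε_sq : ((t ^ 2 - 4) ^ m) ^ 2 = 1 := by
      rw [← pow_mul, mul_comm, show 2 * m = p - 1 by omega, ZMod.pow_card_sub_one_eq_one hD]
    rcases sq_eq_one_iff.mp hε_sq with hε | hε
    · exact Or.inl (cancel (htwo_smul.trans (by rw [hε]; module)))
    · exact Or.inr (Or.inl (cancel (htwo_smul.trans (by rw [hε]; module))))

theorem Matrix.fin_two_one_one_zero_one_pow {R : Type*} [Semiring R] (n : ℕ) :
    (!![1, 1; 0, 1] : Matrix (Fin 2) (Fin 2) R) ^ n = !![1, (n : R); 0, 1] := by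
  induction n with
  | zero => simp [one_fin_two]
  | succ n ih => simp [pow_succ, ih, add_comm]

namespace Matrix.SpecialLinearGroup

theorem coe_add_coe_inv_fin_two {R : Type*} [CommRing R] (A : SL(2, R)) :
    (A : Matrix (Fin 2) (Fin 2) R) + ↑A⁻¹ = (A : Matrix (Fin 2) (Fin 2) R).trace • 1 := by
  rw [coe_inv, adjugate_fin_two]
  ext i j
  fin_cases i <;> fin_cases j <;> simp [trace_fin_two, add_comm]

theorem fin_two_eq_one_or_eq_neg_one_of_sq_eq_one {R : Type*} [CommRing R] [NoZeroDivisors R]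
    (h2 : (2 : R) ≠ 0) {S : SL(2, R)} (hS : S ^ 2 = 1) : S = 1 ∨ S = -1 := by
  have hinv : ((S⁻¹ : SL(2, R)) : Matrix (Fin 2) (Fin 2) R) = S := by
    rw [inv_eq_of_mul_eq_one_left (by rw [← sq, hS])]
  rw [coe_inv, adjugate_fin_two] at hinv
  have h11 : S 1 1 = S 0 0 := by simpa using congrFun (congrFun hinv 0) 0
  have h01 : S 0 1 = 0 := by
    have : -S 0 1 = S 0 1 := by simpa using congrFun (congrFun hinv 0) 1
    exact (mul_eq_zero.mp (by linear_combination -this : 2 * S 0 1 = 0)).resolve_left h2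
  have h10 : S 1 0 = 0 := by
    have : -S 1 0 = S 1 0 := by simpa using congrFun (congrFun hinv 1) 0
    exact (mul_eq_zero.mp (by linear_combination -this : 2 * S 1 0 = 0)).resolve_left h2
  have hdet : S 0 0 ^ 2 = 1 := by
    have := S.det_coe
    rw [det_fin_two, h11, h01] at this
    linear_combination this
  rcases sq_eq_one_iff.mp hdet with h | h
  · left; ext i j; fin_cases i <;> fin_cases j <;> simp [h, h01, h10, h11]
  · right; ext i j; fin_cases i <;> fin_cases j <;> simp [h, h01, h10, h11]

theorem pow_char_fin_two_eq_self_or_inv_or_one_or_neg_one {p : ℕ} [Fact p.Prime] (hp2 : p ≠ 2)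
    (A : SL(2, ZMod p)) : A ^ p = A ∨ A ^ p = A⁻¹ ∨ A ^ p = 1 ∨ A ^ p = -1 := by
  have h := pow_char_eq_self_or_eq_or_eq_one_or_eq_neg_one hp2
    (by rw [← coe_mul, mul_inv_cancel, coe_one]) (coe_add_coe_inv_fin_two A)
  refine h.imp (fun h ↦ ?_) (Or.imp (fun h ↦ ?_) (Or.imp (fun h ↦ ?_) (fun h ↦ ?_))) <;>
    exact Subtype.ext (by simpa using h)

theorem exists_pow_fin_two_eq_one_or_eq_neg_one {p : ℕ} [hp : Fact p.Prime] (hp2 : p ≠ 2)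
    (A : SL(2, ZMod p)) : ∃ k, 0 < k ∧ k ≤ p ∧ (A ^ k = 1 ∨ A ^ k = -1) := by
  have := hp.out.two_le
  rcases pow_char_fin_two_eq_self_or_inv_or_one_or_neg_one hp2 A with h | h | h | h
  · refine ⟨p - 1, by omega, by omega, Or.inl ((mul_eq_right (b := A)).mp ?_)⟩
    rw [← pow_succ, Nat.sub_add_cancel (by omega), h]
  · obtain ⟨m, hm⟩ := hp.out.odd_of_ne_two hp2
    have hsq : (A ^ (m + 1)) ^ 2 = 1 := by
      rw [← pow_mul, show (m + 1) * 2 = p + 1 by omega, pow_succ, h, inv_mul_cancel]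
    exact ⟨m + 1, by omega, by omega,
      fin_two_eq_one_or_eq_neg_one_of_sq_eq_one (ZMod.two_ne_zero_of_ne_two hp2) hsq⟩
  · exact ⟨p, by omega, le_rfl, Or.inl h⟩
  · exact ⟨p, by omega, le_rfl, Or.inr h⟩

end Matrix.SpecialLinearGroup

theorem Subgroup.mem_zpowers_neg_one_iff {G : Type*} [Group G] [HasDistribNeg G] {x : G} :
    x ∈ Subgroup.zpowers (-1 : G) ↔ x = 1 ∨ x = -1 := by
  refine ⟨?_, ?_⟩
  · rintro ⟨k, rfl⟩
    rcases Int.even_or_odd k with hk | hk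
    · exact Or.inl hk.neg_one_zpow
    · exact Or.inr hk.neg_one_zpow
  · rintro (rfl | rfl)
    exacts [one_mem _, mem_zpowers _]

theorem PSL.mk_pow_eq_one_iff {q : ℕ} (A : SL(2, ZMod q)) (k : ℕ) :
    (QuotientGroup.mk A : PSL q) ^ k = 1 ↔ A ^ k = 1 ∨ A ^ k = -1 := by
  rw [← QuotientGroup.mk_pow, QuotientGroup.eq_one_iff, Subgroup.mem_zpowers_neg_one_iff]

theorem PSL.orderOf_mk_of_coe_eq_one_one_zero_one {p : ℕ} [Fact p.Prime] (U : SL(2, ZMod p))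
    (hU : (U : Matrix (Fin 2) (Fin 2) (ZMod p)) = !![1, 1; 0, 1]) :
    orderOf (QuotientGroup.mk U : PSL p) = p := by
  refine orderOf_eq_prime ((PSL.mk_pow_eq_one_iff U p).2 (Or.inl ?_)) ?_
  · apply SpecialLinearGroup.coeMonoidHom_injective
    rw [map_pow, map_one, SpecialLinearGroup.coeMonoidHom_apply, hU, fin_two_one_one_zero_one_pow,
      ZMod.natCast_self, one_fin_two]
  · rw [Ne, ← pow_one (QuotientGroup.mk U : PSL p), PSL.mk_pow_eq_one_iff, pow_one]
    rintro (h | h) <;> simpa [hU] using congrArg (fun B : SL(2, ZMod p) => B 0 1) h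

theorem stmt13 (p : ℕ) (hp : p.Prime) (hodd : p ≠ 2) :
    (∀ x : PSL p, orderOf x ≤ p) ∧
    orderOf ((QuotientGroup.mk
      (⟨!![1, 1; 0, 1], by norm_num [Matrix.det_fin_two_of]⟩ :
        Matrix.SpecialLinearGroup (Fin 2) (ZMod p))) : PSL p) = p := by
  have : Fact p.Prime := ⟨hp⟩
  refine ⟨fun x => ?_, PSL.orderOf_mk_of_coe_eq_one_one_zero_one _ rfl⟩
  obtain ⟨A, rfl⟩ := QuotientGroup.mk_surjective x
  obtain ⟨k, hk0, hkp, hA⟩ := SpecialLinearGroup.exists_pow_fin_two_eq_one_or_eq_neg_one hodd A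
  exact (orderOf_le_of_pow_eq_one hk0 ((PSL.mk_pow_eq_one_iff A k).2 hA)).trans hkp
end

section
/- If q = 2p where p is an odd prime not divisible by 3 (i.e. p ≠ 3), the element of PSL(2, ℤ/2pℤ) represented by the matrix (p+1, 1; p, 1) has order exactly 3p. -/
/-!
Let `t = p` in `ℤ/2p`. Then `t² = t` and `2t = 0` (under `ℤ/2p ≅ ℤ/2 × ℤ/p`, `t = (1, 0)`), and
these two relations alone make the cube of `g = (t+1, 1; t, 1)` the transvection
`(1, t+3; 0, 1)`. Its `p`-th power is trivial because `p (t + 3) = 0`, and it is not `±1` because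
`t + 3 ≠ 0` once `p > 3`; so the order of `g` in `PSL` divides `3p` but not `3`. Reduction modulo
`2` kills `±1` and sends `g` to `(0, 1; 1, 1)`, of order `3` in `SL(2, 𝔽₂)`, so `3` divides the
order as well.
-/

open scoped MatrixGroups

namespace Matrix.SpecialLinearGroup

variable {R S : Type*} [CommRing R] [CommRing S]

lemma transvection_pow {ι : Type*} [DecidableEq ι] [Fintype ι] {i j : ι} (hij : i ≠ j) (b : R)
    (n : ℕ) : transvection hij b ^ n = transvection hij (n * b) := by
  induction n with
  | zero => simp
  | succ n ih => rw [pow_succ, ih, ← transvection_add]; push_cast; ring_nf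

lemma coe_transvection_zero_one (b : R) :
    ((transvection (zero_ne_one : (0 : Fin 2) ≠ 1) b : SL(2, R)) : Matrix (Fin 2) (Fin 2) R) =
      !![1, b; 0, 1] := by
  ext i j
  fin_cases i <;> fin_cases j <;> simp [transvection_coe]

lemma map_neg_one (f : R →+* S) : map f (-1 : SL(2, R)) = -1 :=
  Subtype.ext <| by rw [map_apply_coe, coe_neg, coe_one, map_neg, map_one, coe_neg, coe_one]

-- the product `!![1, 1; 0, 1] * !![1, 0; t, 1]`
def upperLowerShear (t : R) : SL(2, R) :=
  ⟨!![t + 1, 1; t, 1], by rw [Matrix.det_fin_two_of]; ring⟩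

@[simp]
lemma coe_upperLowerShear (t : R) :
    (upperLowerShear t : Matrix (Fin 2) (Fin 2) R) = !![t + 1, 1; t, 1] :=
  rfl

lemma map_upperLowerShear (f : R →+* S) (t : R) :
    map f (upperLowerShear t) = upperLowerShear (f t) := by
  ext i j
  fin_cases i <;> fin_cases j <;> simp

lemma upperLowerShear_pow_three {t : R} (ht : IsIdempotentElem t) (h2 : t + t = 0) :
    upperLowerShear t ^ 3 = transvection zero_ne_one (t + 3) := by
  refine Subtype.ext ?_
  rw [coe_pow, coe_upperLowerShear, coe_transvection_zero_one, pow_three, mul_fin_two,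
    mul_fin_two]
  congr 1
  simp only [vecCons_inj, and_true]
  refine ⟨⟨?_, ?_⟩, ?_, ?_⟩
  · linear_combination (t + 6) * ht.eq + 6 * h2
  · linear_combination ht.eq + 2 * h2
  · linear_combination (t + 5) * ht.eq + 4 * h2
  · linear_combination ht.eq + 2 * h2

lemma orderOf_upperLowerShear_one : orderOf (upperLowerShear (1 : ZMod 2)) = 3 :=
  orderOf_eq_prime (by decide) (by decide)

end Matrix.SpecialLinearGroup

namespace ZMod

lemma natCast_self_add_self_eq_zero (p : ℕ) : (p : ZMod (2 * p)) + p = 0 := by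
  rw [← two_mul]
  exact_mod_cast natCast_self (2 * p)

variable {p : ℕ}

lemma isIdempotentElem_natCast (hp : Odd p) : IsIdempotentElem (p : ZMod (2 * p)) := by
  obtain ⟨k, hk⟩ := hp
  have h : p * p = 2 * p * k + p := by
    calc p * p = p * (2 * k + 1) := by rw [← hk]
      _ = 2 * p * k + p := by ring
  rw [IsIdempotentElem, ← Nat.cast_mul, h, Nat.cast_add, Nat.cast_mul, natCast_self, zero_mul,
    zero_add]

lemma natCast_mul_natCast_add_three (hp : Odd p) : (p : ZMod (2 * p)) * (p + 3) = 0 := by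
  linear_combination (isIdempotentElem_natCast hp).eq + 2 * natCast_self_add_self_eq_zero p

lemma natCast_add_three_ne_zero (hp : 3 < p) : (p : ZMod (2 * p)) + 3 ≠ 0 := by
  rw [show (p : ZMod (2 * p)) + 3 = ((p + 3 : ℕ) : ZMod (2 * p)) by push_cast; rfl, Ne,
    natCast_eq_zero_iff]
  exact Nat.not_dvd_of_pos_of_lt (by omega) (by omega)

lemma castHom_natCast_of_odd (hp : Odd p) :
    castHom (dvd_mul_right 2 p) (ZMod 2) (p : ZMod (2 * p)) = 1 :=
  (map_natCast _ p).trans (natCast_eq_one_iff_odd.mpr hp)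

end ZMod

open Matrix.SpecialLinearGroup

namespace PSL

variable {q : ℕ}

lemma mem_center_of_mk_eq_one {g : SL(2, ZMod q)} (h : (g : PSL q) = 1) :
    g ∈ Subgroup.center SL(2, ZMod q) :=
  Subgroup.zpowers_le.mpr (Subgroup.mem_center_iff.mpr fun g ↦ (Commute.neg_one_right g).eq)
    ((QuotientGroup.eq_one_iff g).mp h)

def toSLZModTwo (h : 2 ∣ q) : PSL q →* SL(2, ZMod 2) :=
  QuotientGroup.lift _ (map (ZMod.castHom h (ZMod 2))) <|
    Subgroup.zpowers_le.mpr <| MonoidHom.mem_ker.mpr <| by rw [map_neg_one]; decide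

lemma toSLZModTwo_mk (h : 2 ∣ q) (g : SL(2, ZMod q)) :
    toSLZModTwo h g = map (ZMod.castHom h (ZMod 2)) g :=
  rfl

end PSL

theorem stmt15 (p : ℕ) (hp : p.Prime) (h2 : p ≠ 2) (h3 : p ≠ 3) :
    orderOf ((QuotientGroup.mk
      (⟨!![(p : ZMod (2 * p)) + 1, 1; (p : ZMod (2 * p)), 1],
          by rw [Matrix.det_fin_two_of]; ring⟩ :
        Matrix.SpecialLinearGroup (Fin 2) (ZMod (2 * p)))) : PSL (2 * p)) = 3 * p := by
  have hodd : Odd p := hp.odd_of_ne_two h2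
  have hp3 : 3 < p := by have := hp.two_le; omega
  change orderOf ((upperLowerShear (p : ZMod (2 * p)) : SL(2, ZMod (2 * p))) : PSL (2 * p)) = 3 * p
  set x : PSL (2 * p) := QuotientGroup.mk (upperLowerShear (p : ZMod (2 * p)))
  have hcube := upperLowerShear_pow_three (ZMod.isIdempotentElem_natCast hodd)
    (ZMod.natCast_self_add_self_eq_zero p)
  have hdvd : orderOf x ∣ 3 * p := orderOf_dvd_of_pow_eq_one <| by
    rw [← QuotientGroup.mk_pow, pow_mul, hcube, transvection_pow,
      ZMod.natCast_mul_natCast_add_three hodd, transvection_coeff_zero, QuotientGroup.mk_one]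
  have hcube_ne : x ^ 3 ≠ 1 := by
    rw [← QuotientGroup.mk_pow, hcube]
    exact fun h ↦ ZMod.natCast_add_three_ne_zero hp3 <|
      (transvection_mem_center_iff _ _).mp (PSL.mem_center_of_mk_eq_one h)
  have hthree : 3 ∣ orderOf x := by
    have := orderOf_map_dvd (PSL.toSLZModTwo (dvd_mul_right 2 p)) x
    rwa [PSL.toSLZModTwo_mk, map_upperLowerShear, ZMod.castHom_natCast_of_odd hodd,
      orderOf_upperLowerShear_one] at this
  obtain ⟨m, hm⟩ := hthree
  rcases (Nat.dvd_prime hp).mp (Nat.dvd_of_mul_dvd_mul_left three_pos (hm ▸ hdvd)) with rfl | rfl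
  · exact absurd (by rw [← mul_one 3, ← hm]; exact pow_orderOf_eq_one x) hcube_ne
  · exact hm
end

section
/- Let Γ be a finite-index subgroup of SL(2,ℤ). Then [SL(2,ℤ) : Γ ∪ -Γ] = Σ_{κ ∈ (ℚ∪{∞})/Γ} W_Γ(κ), the sum of cusp widths over all cusps of Γ. -/
open Matrix CongruenceSubgroup

local notation "SL2Z" => Matrix.SpecialLinearGroup (Fin 2) ℤ

/-- `±Γ` : the subgroup generated by `Γ` and `-1`. -/
def pm (Γ : Subgroup SL2Z) : Subgroup SL2Z := Γ ⊔ Subgroup.zpowers (-1)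

/-- Matrices in `SL(2, ℤ)` whose upper-right entry is divisible by `n`. -/
def GammaUpper (n : ℕ) : Subgroup SL2Z where
  carrier := { g | ((g 0 1 : ℤ) : ZMod n) = 0 }
  one_mem' := by simp
  mul_mem' := by
    intro a b ha hb
    have h := (Matrix.two_mul_expl a.1 b.1).2.1
    simp only [Set.mem_setOf_eq] at *
    rw [Matrix.SpecialLinearGroup.coe_mul, h]
    push_cast
    rw [ha, hb]
    ring
  inv_mem' := by
    intro a ha
    simp only [Set.mem_setOf_eq] at *
    rw [Matrix.SpecialLinearGroup.SL2_inv_expl a]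
    simp [ha]

/-- The group `Γ_q^n`: `a ≡ d ≡ 1, c ≡ 0 (mod q)` and `b ≡ 0 (mod n)`. -/
def GammaQN (q n : ℕ) : Subgroup SL2Z := Gamma1 q ⊓ GammaUpper n

/-- The Möbius action of `SL(2, ℤ)` on `ℚ ∪ {∞}`, with `∞` encoded as `none`. -/
def moebius (g : Matrix.SpecialLinearGroup (Fin 2) ℤ) (x : Option ℚ) : Option ℚ :=
  match x with
  | none => if ((g.1 1 0 : ℤ) : ℚ) = 0 then none
      else some (((g.1 0 0 : ℤ) : ℚ) / ((g.1 1 0 : ℤ) : ℚ))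
  | some t => if ((g.1 1 0 : ℤ) : ℚ) * t + ((g.1 1 1 : ℤ) : ℚ) = 0 then none
      else some ((((g.1 0 0 : ℤ) : ℚ) * t + ((g.1 0 1 : ℤ) : ℚ)) /
        (((g.1 1 0 : ℤ) : ℚ) * t + ((g.1 1 1 : ℤ) : ℚ)))

/-- Two cusps are `Γ`-equivalent if some element of `Γ` maps one to the other. -/
def cuspRel (G : Subgroup (Matrix.SpecialLinearGroup (Fin 2) ℤ)) (x y : Option ℚ) : Prop :=
  ∃ γ ∈ G, moebius γ x = y

/-- The number of cusps of `Γ`, i.e. the number of `Γ`-orbits on `ℚ ∪ {∞}`. -/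
noncomputable def numCusps (G : Subgroup (Matrix.SpecialLinearGroup (Fin 2) ℤ)) : ℕ :=
  Nat.card (Quot (cuspRel G))

/-- `IsWidth Γ κ R` : `R` is the cusp width of `κ` with respect to `Γ`, i.e. for any
`N ∈ SL(2, ℤ)` with `N∞ = κ`, the elements of `N⁻¹(Γ ∪ -Γ)N` fixing `∞` are exactly
`±(1, mR; 0, 1)`, `m ∈ ℤ`. -/
def IsWidth (G : Subgroup (Matrix.SpecialLinearGroup (Fin 2) ℤ)) (κ : Option ℚ) (R : ℕ) :
    Prop :=
  0 < R ∧ ∀ N : Matrix.SpecialLinearGroup (Fin 2) ℤ, moebius N none = κ →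
    {M : Matrix.SpecialLinearGroup (Fin 2) ℤ |
        (N * M * N⁻¹ ∈ G ∨ -(N * M * N⁻¹) ∈ G) ∧ moebius M none = none}
      = {M : Matrix.SpecialLinearGroup (Fin 2) ℤ |
          ∃ m : ℤ, M = ModularGroup.T ^ (m * R) ∨ M = -(ModularGroup.T ^ (m * R))}

/-!
`SL(2, ℤ)` acts on `ℚ ∪ {∞}` transitively, and the stabiliser of `∞` is `P = {±Tᵇ}`.
Choosing `Nᵢ` with `Nᵢ ∞ = κᵢ`, the double cosets `(±Γ) Nᵢ P` partition `SL(2, ℤ)`, and the right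
cosets of `±Γ` inside `(±Γ) Nᵢ P` correspond to the cosets in `P` of
`P ∩ Nᵢ⁻¹ (±Γ) Nᵢ = {±T^(m Wᵢ)}`, of which there are exactly `Wᵢ`.
-/

section DoubleCosets

open QuotientGroup MulAction

variable {G X ι : Type*} [Group G] [MulAction G X] (H : Subgroup G) (x₀ : X) (N : ι → G)

abbrev conjStabilizer (i : ι) : Subgroup (stabilizer G x₀) :=
  (H.comap (MulAut.conj (N i)).toMonoidHom).subgroupOf (stabilizer G x₀)

def sigmaToRightCosets :
    (Σ i, Quotient (rightRel (conjStabilizer H x₀ N i))) → Quotient (rightRel H) :=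
  fun q => Quotient.map' (fun p : stabilizer G x₀ => N q.1 * p) (fun a b hab => by
    rw [rightRel_apply, Subgroup.mem_subgroupOf, Subgroup.mem_comap] at hab
    rw [rightRel_apply]
    simpa [mul_assoc] using hab) q.2

lemma sigmaToRightCosets_mk (i : ι) (p : stabilizer G x₀) :
    sigmaToRightCosets H x₀ N ⟨i, ⟦p⟧⟩ = ⟦N i * p⟧ := rfl

lemma sigmaToRightCosets_injective
    (hdisj : ∀ i j, (∃ h ∈ H, h • N i • x₀ = N j • x₀) → i = j) :
    Function.Injective (sigmaToRightCosets H x₀ N) := by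
  rintro ⟨i, p⟩ ⟨j, q⟩ hpq
  induction p using Quotient.inductionOn with | h p => ?_
  induction q using Quotient.inductionOn with | h q => ?_
  rw [sigmaToRightCosets_mk, sigmaToRightCosets_mk] at hpq
  have hmem : N j * q * (N i * p)⁻¹ ∈ H := rightRel_apply.1 (Quotient.exact hpq)
  have hconj : N j * q * (N i * p)⁻¹ * N i = N j * q * (p : G)⁻¹ := by group
  obtain rfl : i = j := hdisj i j ⟨_, hmem, by
    rw [smul_smul, hconj, mul_smul, mul_smul, inv_smul_eq_iff.2 p.2.symm, q.2]⟩
  refine congrArg (Sigma.mk i) (Quotient.sound (rightRel_apply.2 ?_))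
  rw [Subgroup.mem_subgroupOf, Subgroup.mem_comap]
  simpa [mul_assoc] using hmem

lemma sigmaToRightCosets_surjective
    (hcover : ∀ g : G, ∃ i, ∃ h ∈ H, h • N i • x₀ = g • x₀) :
    Function.Surjective (sigmaToRightCosets H x₀ N) := by
  intro q
  induction q using Quotient.inductionOn with | h g => ?_
  obtain ⟨i, h, hH, hg⟩ := hcover g
  have hp : (N i)⁻¹ * h⁻¹ * g ∈ stabilizer G x₀ := by
    rw [mem_stabilizer_iff, mul_smul, mul_smul, ← hg, inv_smul_smul, inv_smul_smul]
  refine ⟨⟨i, ⟦⟨_, hp⟩⟧⟩, Quotient.sound (rightRel_apply.2 ?_)⟩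
  simpa [mul_assoc] using hH

theorem Subgroup.index_eq_sum_relIndex_stabilizer [Fintype ι]
    (hdisj : ∀ i j, (∃ h ∈ H, h • N i • x₀ = N j • x₀) → i = j)
    (hcover : ∀ g : G, ∃ i, ∃ h ∈ H, h • N i • x₀ = g • x₀)
    (hfin : ∀ i, (H.comap (MulAut.conj (N i)).toMonoidHom).relIndex (stabilizer G x₀) ≠ 0) :
    H.index = ∑ i, (H.comap (MulAut.conj (N i)).toMonoidHom).relIndex (stabilizer G x₀) := by
  have hcard (K : Subgroup G) (L : Subgroup K) : Nat.card (Quotient (rightRel L)) = L.index :=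
    Nat.card_congr (quotientRightRelEquivQuotientLeftRel L)
  have (i : ι) : Finite (Quotient (rightRel (conjStabilizer H x₀ N i))) :=
    Nat.finite_of_card_ne_zero ((hcard _ _).trans_ne (hfin i))
  calc H.index = Nat.card (Quotient (rightRel H)) :=
        (Nat.card_congr (quotientRightRelEquivQuotientLeftRel H)).symm
    _ = Nat.card (Σ i, Quotient (rightRel (conjStabilizer H x₀ N i))) :=
      (Nat.card_eq_of_bijective _ ⟨sigmaToRightCosets_injective H x₀ N hdisj,
        sigmaToRightCosets_surjective H x₀ N hcover⟩).symm
    _ = _ := by rw [Nat.card_sigma]; exact Finset.sum_congr rfl fun i _ => hcard _ _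

end DoubleCosets

open ModularGroup MulAction

open Matrix.SpecialLinearGroup in
lemma mapGL_smul_eq_moebius (g : SL2Z) (x : OnePoint ℚ) :
    mapGL ℚ g • x = moebius g x := by
  induction x using OnePoint.rec with
  | infty => simp [moebius, OnePoint.smul_infty_eq_ite]; rfl
  | coe t => simp [moebius, OnePoint.smul_some_eq_ite]; rfl

/-- `OnePoint ℚ` is `Option ℚ` by definition, so `moebius` is the restriction of the action of
`GL(2, ℚ)` on the projective line (`mapGL_smul_eq_moebius`). -/
instance : MulAction SL2Z (Option ℚ) :=
  MulAction.compHom (OnePoint ℚ) (Matrix.SpecialLinearGroup.mapGL ℚ)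

lemma smul_eq_moebius (g : SL2Z) (x : Option ℚ) : g • x = moebius g x :=
  mapGL_smul_eq_moebius g x

lemma neg_one_smul_option (x : Option ℚ) : (-1 : SL2Z) • x = x := by
  cases x <;> simp [smul_eq_moebius, moebius]

lemma neg_smul_option (g : SL2Z) (x : Option ℚ) : (-g) • x = g • x := by
  rw [← neg_one_mul, mul_smul, neg_one_smul_option]

lemma smul_none_eq_none_iff (g : SL2Z) : g • (none : Option ℚ) = none ↔ g 1 0 = 0 := by
  simp [smul_eq_moebius, moebius]

lemma eq_T_zpow_or_neg_of_c_eq_zero {g : SL2Z} (hc : g 1 0 = 0) :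
    ∃ n : ℤ, g = T ^ n ∨ g = -T ^ n := by
  have had := g.det_coe
  rw [Matrix.det_fin_two, hc, mul_zero, sub_zero] at had
  rcases Int.eq_one_or_neg_one_of_mul_eq_one' had with ⟨ha, hd⟩ | ⟨ha, hd⟩
  · refine ⟨g 0 1, Or.inl ?_⟩
    ext i j; fin_cases i <;> fin_cases j <;> simp [ha, hc, hd, coe_T_zpow]
  · refine ⟨-g 0 1, Or.inr ?_⟩
    ext i j; fin_cases i <;> fin_cases j <;> simp [ha, hc, hd, coe_T_zpow]

lemma exists_smul_none_eq (x : Option ℚ) : ∃ g : SL2Z, g • none = x := by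
  cases x with
  | none => exact ⟨1, one_smul _ _⟩
  | some t =>
    obtain ⟨u, v, huv⟩ : IsCoprime t.num t.den := Int.isCoprime_iff_gcd_eq_one.2 t.reduced
    let g : SL2Z := ⟨!![t.num, -v; t.den, u], by rw [Matrix.det_fin_two_of]; linear_combination huv⟩
    refine ⟨g, ?_⟩
    rw [smul_eq_moebius]
    simp [moebius, g, Rat.num_div_den]

lemma mem_pm {Γ : Subgroup SL2Z} {g : SL2Z} : g ∈ pm Γ ↔ g ∈ Γ ∨ -g ∈ Γ := by
  refine ⟨fun hg => ?_, ?_⟩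
  · let Γ' : Subgroup SL2Z :=
      { carrier := {g | g ∈ Γ ∨ -g ∈ Γ}
        one_mem' := Or.inl Γ.one_mem
        mul_mem' := by
          rintro a b (ha | ha) (hb | hb)
          · exact Or.inl (mul_mem ha hb)
          · exact Or.inr (by simpa using mul_mem ha hb)
          · exact Or.inr (by simpa using mul_mem ha hb)
          · exact Or.inl (by simpa using mul_mem ha hb)
        inv_mem' := by
          rintro a (ha | ha)
          · exact Or.inl (inv_mem ha)
          · exact Or.inr (by simpa [inv_neg] using inv_mem ha) }
    have hle : pm Γ ≤ Γ' :=
      sup_le (fun _ => Or.inl) (Subgroup.zpowers_le.2 (Or.inr (by simp)))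
    exact hle hg
  · rintro (hg | hg)
    · exact Subgroup.mem_sup_left hg
    · simpa [pm] using mul_mem (Subgroup.mem_sup_right (Subgroup.mem_zpowers (-1)) : -1 ∈ pm Γ)
        (Subgroup.mem_sup_left hg)

lemma cuspRel_iff_exists_mem_pm {Γ : Subgroup SL2Z} {x y : Option ℚ} :
    cuspRel Γ x y ↔ ∃ g ∈ pm Γ, g • x = y := by
  simp only [cuspRel, mem_pm, ← smul_eq_moebius]
  constructor
  · rintro ⟨g, hg, rfl⟩
    exact ⟨g, Or.inl hg, rfl⟩
  · rintro ⟨g, hg | hg, rfl⟩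
    · exact ⟨g, hg, rfl⟩
    · exact ⟨-g, hg, neg_smul_option g x⟩

lemma T_zpow_smul_none (b : ℤ) : (T ^ b) • (none : Option ℚ) = none := by
  simp [smul_none_eq_none_iff, coe_T_zpow]

lemma T_zpow_injective : Function.Injective (fun b : ℤ => T ^ b) := fun a b hab => by
  simpa [coe_T_zpow] using congrArg (fun g : SL2Z => g 0 1) hab

lemma T_zpow_ne_neg_T_zpow (a b : ℤ) : T ^ a ≠ -T ^ b := fun hab => by
  simpa [coe_T_zpow] using congrArg (fun g : SL2Z => g 0 0) hab

section Width

variable {Γ : Subgroup SL2Z} {κ : Option ℚ} {W : ℕ} {N : SL2Z}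

lemma IsWidth.conj_mem_pm_iff (hW : IsWidth Γ κ W) (hN : N • none = κ) {M : SL2Z}
    (hM : M • (none : Option ℚ) = none) :
    N * M * N⁻¹ ∈ pm Γ ↔ ∃ m : ℤ, M = T ^ (m * W) ∨ M = -T ^ (m * W) := by
  have := Set.ext_iff.1 (hW.2 N ((smul_eq_moebius N none).symm.trans hN)) M
  simp only [Set.mem_ofPred_eq, ← smul_eq_moebius, hM, and_true] at this
  rw [mem_pm, this]

lemma IsWidth.conj_T_zpow_mem_pm_iff (hW : IsWidth Γ κ W) (hN : N • none = κ) (b : ℤ) :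
    N * T ^ b * N⁻¹ ∈ pm Γ ↔ (W : ℤ) ∣ b := by
  rw [hW.conj_mem_pm_iff hN (T_zpow_smul_none b)]
  constructor
  · rintro ⟨m, hm | hm⟩
    · exact ⟨m, (T_zpow_injective hm).trans (mul_comm m W)⟩
    · exact absurd hm (T_zpow_ne_neg_T_zpow _ _)
  · rintro ⟨m, rfl⟩
    exact ⟨m, Or.inl (by rw [mul_comm])⟩

lemma IsWidth.relIndex_stabilizer_none (hW : IsWidth Γ κ W) (hN : N • none = κ) :
    ((pm Γ).comap (MulAut.conj N).toMonoidHom).relIndex (stabilizer SL2Z (none : Option ℚ)) = W := by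
  set P := stabilizer SL2Z (none : Option ℚ)
  set K := ((pm Γ).comap (MulAut.conj N).toMonoidHom).subgroupOf P
  let f : Fin W → P ⧸ K := fun r => ((⟨T ^ (r : ℤ), T_zpow_smul_none _⟩ : P) : P ⧸ K)
  have hK (p : P) : p ∈ K ↔ N * p * N⁻¹ ∈ pm Γ := Iff.rfl
  have hf : Function.Bijective f := by
    constructor
    · intro r s hrs
      rw [QuotientGroup.eq, hK] at hrs
      simp only [Subgroup.coe_mul, InvMemClass.coe_inv, ← _root_.zpow_neg,
        ← _root_.zpow_add] at hrs
      rw [hW.conj_T_zpow_mem_pm_iff hN, neg_add_eq_sub] at hrs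
      exact Fin.ext (Nat.ModEq.eq_of_lt_of_lt ((Nat.modEq_iff_dvd ..).2 hrs) r.2 s.2)
    · rintro ⟨p⟩
      obtain ⟨b, hb⟩ := eq_T_zpow_or_neg_of_c_eq_zero ((smul_none_eq_none_iff _).1 p.2)
      have hWpos : (0 : ℤ) < W := by exact_mod_cast hW.1
      have hr0 := Int.emod_nonneg b hWpos.ne'
      have hrW := Int.emod_lt_of_pos b hWpos
      refine ⟨⟨(b % W).toNat, by omega⟩, (QuotientGroup.eq).2 ((hK _).2 ?_)⟩
      rw [hW.conj_mem_pm_iff hN (_ * p).2]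
      refine ⟨b / W, ?_⟩
      have hT : (T ^ (b % W))⁻¹ * T ^ b = T ^ (b / W * W) := by
        rw [← _root_.zpow_neg, ← _root_.zpow_add, Int.emod_def]
        ring_nf
      simp only [Subgroup.coe_mul, InvMemClass.coe_inv, Int.toNat_of_nonneg hr0]
      rcases hb with hb | hb
      · exact Or.inl (hb ▸ hT)
      · exact Or.inr (by rw [hb, mul_neg, hT])
  rw [Subgroup.relIndex, Subgroup.index, ← Nat.card_eq_of_bijective f hf, Nat.card_eq_fintype_card,
    Fintype.card_fin]

end Width

theorem stmt18_general (Γ : Subgroup (Matrix.SpecialLinearGroup (Fin 2) ℤ))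
    (h : ℕ) (κs : Fin h → Option ℚ)
    (hdisj : ∀ i j, i ≠ j → ¬ cuspRel Γ (κs i) (κs j))
    (hcover : ∀ x : Option ℚ, ∃ i, cuspRel Γ (κs i) x)
    (Ws : Fin h → ℕ) (hWs : ∀ i, IsWidth Γ (κs i) (Ws i)) :
    (pm Γ).index = ∑ i, Ws i := by
  choose N hN using fun i => exists_smul_none_eq (κs i)
  have hwidth i := (hWs i).relIndex_stabilizer_none (hN i)
  rw [Subgroup.index_eq_sum_relIndex_stabilizer (pm Γ) none N ?_ ?_
    fun i => (hwidth i).trans_ne (hWs i).1.ne']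
  · exact Finset.sum_congr rfl fun i _ => hwidth i
  · intro i j hij
    by_contra hne
    exact hdisj i j hne (cuspRel_iff_exists_mem_pm.2 (hN i ▸ hN j ▸ hij))
  · intro g
    obtain ⟨i, hi⟩ := hcover (g • none)
    exact ⟨i, hN i ▸ cuspRel_iff_exists_mem_pm.1 hi⟩

theorem stmt18 (Γ : Subgroup (Matrix.SpecialLinearGroup (Fin 2) ℤ)) (hfin : Γ.index ≠ 0)
    (h : ℕ) (κs : Fin h → Option ℚ)
    (hdisj : ∀ i j, i ≠ j → ¬ cuspRel Γ (κs i) (κs j))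
    (hcover : ∀ x : Option ℚ, ∃ i, cuspRel Γ (κs i) x)
    (Ws : Fin h → ℕ) (hWs : ∀ i, IsWidth Γ (κs i) (Ws i)) :
    (pm Γ).index = ∑ i, Ws i :=
  stmt18_general Γ h κs hdisj hcover Ws hWs
end
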